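/- For any coloring of an AGW graph and any weight function w, if the image V·s of a word s is an F-clique, then for every q ∈ V·s the preimage δ_s⁻¹({q}) is an F-maximal set, i.e., its weight equals w*. -/

import Mathlib

/-!
Since `w` is a left eigenvector for `k`, the preimages `D·a⁻¹` of a set `D` under the `k`
letters have total weight `k · w(D)`. If `D` is F-maximal, each of them weighs at most
`w(D)`, so all weigh exactly `w(D)` and are F-maximal again; hence so is `D·u⁻¹` for every
word `u`. By strong connectivity, some such preimage `D'` of an F-maximal set contains `q`.
No other state of the F-clique `V·s` lies in `D'`, since it would form a synchronizing pair
with `q`; so `δ_s⁻¹({q}) = D'·s⁻¹`, which is F-maximal of weight `w*`.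
-/

/-- A directed cycle in the multigraph `E`: a nonempty list of distinct vertices,
consecutive vertices joined by edges, and an edge from the last back to the first. -/
def IsCycle {V : Type} (E : V → Multiset V) (l : List V) : Prop :=
  ∃ h : l ≠ [], l.Nodup ∧ l.Chain' (fun a b => b ∈ E a) ∧ l.head h ∈ E (l.getLast h)

/-- An AGW graph: constant outdegree `k`, strongly connected, and the gcd of the
lengths of all directed cycles is 1 (every common divisor of cycle lengths is 1). -/
def IsAGW {V : Type} (E : V → Multiset V) (k : ℕ) : Prop :=
  (∀ v, Multiset.card (E v) = k) ∧
  (∀ u v : V, Relation.ReflTransGen (fun a b => b ∈ E a) u v) ∧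
  (∀ d : ℕ, (∀ l : List V, IsCycle E l → d ∣ l.length) → d = 1)

/-- A coloring of the multigraph: for every vertex `v` the multiset of images
`{δ a v : a ∈ Fin k}` (with multiplicity) equals `E v`. -/
def IsColoring {V : Type} [Fintype V] {k : ℕ} (E : V → Multiset V)
    (δ : Fin k → V → V) : Prop :=
  ∀ v, Multiset.map (fun a => δ a v) (Finset.univ : Finset (Fin k)).val = E v

/-- The map `δ_s` of a word `s`: apply the letters of `s` from left to right. -/
def wordMap {V : Type} {k : ℕ} (δ : Fin k → V → V) (s : List (Fin k)) (v : V) : V :=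
  s.foldl (fun x a => δ a x) v

/-- A pair of states is synchronizing if some word maps them to the same state. -/
def SyncPair {V : Type} {k : ℕ} (δ : Fin k → V → V) (p q : V) : Prop :=
  ∃ s : List (Fin k), wordMap δ s p = wordMap δ s q

/-- A pair is stable if all of its images under words are equal or synchronizing. -/
def Stable {V : Type} {k : ℕ} (δ : Fin k → V → V) (p q : V) : Prop :=
  ∀ u : List (Fin k), SyncPair δ (wordMap δ u p) (wordMap δ u q)

/-- A word is synchronizing if it maps the whole state set to a single state. -/
def IsSynchronizingWord {V : Type} {k : ℕ} (δ : Fin k → V → V) (s : List (Fin k)) : Prop :=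
  ∃ q : V, ∀ v : V, wordMap δ s v = q

/-- An F-clique: an image `V·s` of the whole state set in which every pair of
distinct states is a deadlock (not synchronizing). -/
def IsFClique {V : Type} [Fintype V] [DecidableEq V] {k : ℕ}
    (δ : Fin k → V → V) (F : Finset V) : Prop :=
  (∃ s : List (Fin k), F = Finset.image (wordMap δ s) Finset.univ) ∧
  ∀ p ∈ F, ∀ q ∈ F, p ≠ q → ¬ SyncPair δ p q

/-- A weight function: positive and a left eigenvector of the adjacency matrix
(multiplicities of edges) with eigenvalue `k`. -/
def IsWeight {V : Type} [Fintype V] [DecidableEq V] (E : V → Multiset V) (k : ℕ)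
    (w : V → ℕ) : Prop :=
  (∀ v, 1 ≤ w v) ∧ ∀ q, (∑ p, w p * (E p).count q) = k * w q

/-- The weight of a set of vertices. -/
def weight {V : Type} (w : V → ℕ) (D : Finset V) : ℕ := ∑ p ∈ D, w p

/-- `D` is mapped to a single state by some word. -/
def IsSyncSet {V : Type} [Fintype V] [DecidableEq V] {k : ℕ} (δ : Fin k → V → V)
    (D : Finset V) : Prop :=
  ∃ s : List (Fin k), (D.image (wordMap δ s)).card = 1

/-- An F-maximal set: a set mapped to a single state by some word, of maximal weight. -/
def IsFMaximal {V : Type} [Fintype V] [DecidableEq V] {k : ℕ} (δ : Fin k → V → V)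
    (w : V → ℕ) (D : Finset V) : Prop :=
  IsSyncSet δ D ∧ ∀ D' : Finset V, IsSyncSet δ D' → weight w D' ≤ weight w D

/-- `w*`: the maximal weight of a set mapped to a single state by some word. -/
noncomputable def wstar {V : Type} [Fintype V] [DecidableEq V] {k : ℕ}
    (δ : Fin k → V → V) (w : V → ℕ) : ℕ :=
  sSup {m | ∃ D : Finset V, IsSyncSet δ D ∧ weight w D = m}

/-- A spanning subgraph: a choice of one outgoing edge of every vertex. -/
def IsSpanning {V : Type} (E : V → Multiset V) (f : V → V) : Prop :=
  ∀ v, f v ∈ E v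

/-- The level of a vertex: the least `m` such that `f^[m] v` is `f`-periodic. -/
noncomputable def level {V : Type} (f : V → V) (v : V) : ℕ :=
  sInf {m | ∃ n > 0, f^[n] (f^[m] v) = f^[m] v}

/-- The root of a vertex: its image on the cycle reached along its tree. -/
noncomputable def root {V : Type} (f : V → V) (v : V) : V :=
  f^[level f v] v

lemma wordMap_append {V : Type} {k : ℕ} (δ : Fin k → V → V) (s t : List (Fin k)) (p : V) :
    wordMap δ (s ++ t) p = wordMap δ t (wordMap δ s p) :=
  List.foldl_append

lemma IsColoring.exists_wordMap_eq {V : Type} [Fintype V] {k : ℕ} {E : V → Multiset V}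
    {δ : Fin k → V → V} (hδ : IsColoring E δ) {u v : V}
    (huv : Relation.ReflTransGen (fun a b => b ∈ E a) u v) :
    ∃ t : List (Fin k), wordMap δ t u = v := by
  induction huv with
  | refl => exact ⟨[], rfl⟩
  | @tail b c _ hbc ih =>
    obtain ⟨t, rfl⟩ := ih
    rw [← hδ] at hbc
    obtain ⟨a, -, rfl⟩ := Multiset.mem_map.mp hbc
    exact ⟨t ++ [a], wordMap_append δ t [a] u⟩

section

variable {V : Type} [Fintype V] [DecidableEq V] {k : ℕ}

def wordPreimage (δ : Fin k → V → V) (s : List (Fin k)) (D : Finset V) : Finset V :=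
  Finset.univ.filter fun p => wordMap δ s p ∈ D

@[simp]
lemma mem_wordPreimage {δ : Fin k → V → V} {s : List (Fin k)} {D : Finset V} {p : V} :
    p ∈ wordPreimage δ s D ↔ wordMap δ s p ∈ D := by
  simp [wordPreimage]

lemma wordPreimage_nil (δ : Fin k → V → V) (D : Finset V) : wordPreimage δ [] D = D := by
  ext p
  simp [wordMap]

lemma wordPreimage_cons (δ : Fin k → V → V) (a : Fin k) (s : List (Fin k)) (D : Finset V) :
    wordPreimage δ (a :: s) D = wordPreimage δ [a] (wordPreimage δ s D) := by
  ext p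
  simp [wordMap]

lemma IsSyncSet.nonempty {δ : Fin k → V → V} {D : Finset V} (hD : IsSyncSet δ D) :
    D.Nonempty := by
  obtain ⟨t, ht⟩ := hD
  exact Finset.image_nonempty.mp (Finset.card_pos.mp (ht ▸ Nat.one_pos))

lemma IsSyncSet.syncPair {δ : Fin k → V → V} {D : Finset V} (hD : IsSyncSet δ D)
    {p q : V} (hp : p ∈ D) (hq : q ∈ D) : SyncPair δ p q := by
  obtain ⟨t, ht⟩ := hD
  exact ⟨t, Finset.card_le_one.mp ht.le _ (Finset.mem_image_of_mem _ hp) _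
    (Finset.mem_image_of_mem _ hq)⟩

lemma IsSyncSet.wordPreimage {δ : Fin k → V → V} {D : Finset V} (hD : IsSyncSet δ D)
    (s : List (Fin k)) (hne : (wordPreimage δ s D).Nonempty) :
    IsSyncSet δ (wordPreimage δ s D) := by
  obtain ⟨t, ht⟩ := hD
  refine ⟨s ++ t, le_antisymm (Finset.card_le_one.mpr ?_) (Finset.card_pos.mpr (hne.image _))⟩
  simp only [Finset.mem_image, mem_wordPreimage, wordMap_append]
  rintro _ ⟨p, hp, rfl⟩ _ ⟨p', hp', rfl⟩
  exact Finset.card_le_one.mp ht.le _ (Finset.mem_image_of_mem _ hp) _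
    (Finset.mem_image_of_mem _ hp')

lemma IsFMaximal.weight_wordPreimage_le {δ : Fin k → V → V} {w : V → ℕ} {D : Finset V}
    (hD : IsFMaximal δ w D) (s : List (Fin k)) :
    weight w (wordPreimage δ s D) ≤ weight w D := by
  rcases (wordPreimage δ s D).eq_empty_or_nonempty with hempty | hne
  · simp [hempty, weight]
  · exact hD.2 _ (hD.1.wordPreimage s hne)

lemma IsColoring.card_filter_eq_count {E : V → Multiset V} {δ : Fin k → V → V}
    (hδ : IsColoring E δ) (p q : V) :
    (Finset.univ.filter fun a => δ a p = q).card = (E p).count q := by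
  rw [← hδ p, Multiset.count_map, Multiset.filter_congr fun a _ => eq_comm]
  rfl

lemma IsColoring.sum_weight_wordPreimage_singleton {E : V → Multiset V}
    {δ : Fin k → V → V} {w : V → ℕ} (hδ : IsColoring E δ)
    (hw : ∀ q, ∑ p, w p * (E p).count q = k * w q) (D : Finset V) :
    ∑ a, weight w (wordPreimage δ [a] D) = k * weight w D := by
  calc ∑ a, weight w (wordPreimage δ [a] D)
      = ∑ p, w p * (Finset.univ.filter fun a => δ a p ∈ D).card := by
        simp only [weight, wordPreimage, Finset.sum_filter]
        rw [Finset.sum_comm]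
        refine Finset.sum_congr rfl fun p _ => ?_
        rw [← Finset.sum_filter, Finset.sum_const, smul_eq_mul, mul_comm]
        rfl
    _ = ∑ p, ∑ q ∈ D, w p * (E p).count q := by
        refine Finset.sum_congr rfl fun p _ => ?_
        rw [Finset.card_eq_sum_card_fiberwise (s := Finset.univ.filter fun a => δ a p ∈ D)
          (t := D) fun a ha => (Finset.mem_filter.mp ha).2, Finset.mul_sum]
        refine Finset.sum_congr rfl fun q hq => ?_
        rw [Finset.filter_filter, ← hδ.card_filter_eq_count]
        congr 3
        ext a
        exact and_iff_right_of_imp fun h => h ▸ hq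
    _ = ∑ q ∈ D, ∑ p, w p * (E p).count q := Finset.sum_comm
    _ = k * weight w D := by simp only [hw, weight, Finset.mul_sum]

lemma IsFMaximal.wordPreimage_singleton {E : V → Multiset V} {δ : Fin k → V → V}
    {w : V → ℕ} (hδ : IsColoring E δ) (hw : IsWeight E k w) {D : Finset V}
    (hD : IsFMaximal δ w D) (a : Fin k) :
    IsFMaximal δ w (wordPreimage δ [a] D) ∧ weight w (wordPreimage δ [a] D) = weight w D := by
  have hall : ∀ b ∈ Finset.univ, weight w (wordPreimage δ [b] D) = weight w D := by
    refine (Finset.sum_eq_sum_iff_of_le fun b _ => hD.weight_wordPreimage_le [b]).mp ?_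
    rw [hδ.sum_weight_wordPreimage_singleton hw.2, Finset.sum_const, Finset.card_univ,
      Fintype.card_fin, smul_eq_mul]
  have heq := hall a (Finset.mem_univ a)
  have hne : (wordPreimage δ [a] D).Nonempty :=
    Finset.nonempty_of_sum_ne_zero
      (heq.trans_ne (Finset.sum_pos (fun p _ => hw.1 p) hD.1.nonempty).ne')
  exact ⟨⟨hD.1.wordPreimage [a] hne, fun D' hD' => (hD.2 D' hD').trans heq.ge⟩, heq⟩

lemma IsFMaximal.wordPreimage {E : V → Multiset V} {δ : Fin k → V → V} {w : V → ℕ}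
    (hδ : IsColoring E δ) (hw : IsWeight E k w) {D : Finset V} (hD : IsFMaximal δ w D)
    (s : List (Fin k)) :
    IsFMaximal δ w (wordPreimage δ s D) ∧ weight w (wordPreimage δ s D) = weight w D := by
  induction s generalizing D with
  | nil => rw [wordPreimage_nil]; exact ⟨hD, rfl⟩
  | cons a s ih =>
    obtain ⟨hmax, hweight⟩ := ih hD
    obtain ⟨hmax', hweight'⟩ := hmax.wordPreimage_singleton hδ hw a
    rw [wordPreimage_cons]
    exact ⟨hmax', hweight'.trans hweight⟩

lemma exists_isFMaximal_weight_eq_wstar [Nonempty V] (δ : Fin k → V → V) (w : V → ℕ) :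
    ∃ D : Finset V, IsFMaximal δ w D ∧ weight w D = wstar δ w := by
  set S : Set ℕ := {m | ∃ D : Finset V, IsSyncSet δ D ∧ weight w D = m}
  have hne : S.Nonempty :=
    ⟨_, {Classical.arbitrary V}, ⟨[], by simp⟩, rfl⟩
  have hbdd : BddAbove S := by
    refine ⟨weight w Finset.univ, ?_⟩
    rintro _ ⟨D, -, rfl⟩
    exact Finset.sum_le_sum_of_subset D.subset_univ
  obtain ⟨D, hsync, hweight⟩ : wstar δ w ∈ S := Nat.sSup_mem hne hbdd
  exact ⟨D, ⟨hsync, fun D' hD' => hweight ▸ le_csSup hbdd ⟨D', hD', rfl⟩⟩, hweight⟩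

lemma IsFClique.wordPreimage_eq_filter {δ : Fin k → V → V} {s : List (Fin k)}
    (hclq : IsFClique δ (Finset.univ.image (wordMap δ s))) {D : Finset V}
    (hD : IsSyncSet δ D) {q : V} (hqD : q ∈ D) (hq : q ∈ Finset.univ.image (wordMap δ s)) :
    wordPreimage δ s D = Finset.univ.filter fun p => wordMap δ s p = q := by
  ext p
  simp only [mem_wordPreimage, Finset.mem_filter, Finset.mem_univ, true_and]
  refine ⟨fun hp => by_contra fun hne => ?_, fun hp => hp ▸ hqD⟩
  exact hclq.2 _ (Finset.mem_image_of_mem _ (Finset.mem_univ p)) q hq hne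
    (hD.syncPair hp hqD)

end

theorem preimage_of_FClique_is_F_maximal_general {V : Type} [Fintype V] [DecidableEq V]
    (E : V → Multiset V) (k : ℕ) (hAGW : IsAGW E k)
    (δ : Fin k → V → V) (hδ : IsColoring E δ) (w : V → ℕ) (hw : IsWeight E k w)
    (s : List (Fin k)) (hclq : IsFClique δ (Finset.image (wordMap δ s) Finset.univ))
    (q : V) (hq : q ∈ Finset.image (wordMap δ s) Finset.univ) :
    IsFMaximal δ w (Finset.univ.filter (fun p => wordMap δ s p = q)) ∧
      weight w (Finset.univ.filter (fun p => wordMap δ s p = q)) = wstar δ w := by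
  have : Nonempty V := ⟨q⟩
  obtain ⟨D₀, hD₀, hweight₀⟩ := exists_isFMaximal_weight_eq_wstar δ w
  obtain ⟨r, hr⟩ := hD₀.1.nonempty
  obtain ⟨v, hv⟩ := hδ.exists_wordMap_eq (hAGW.2.1 q r)
  obtain ⟨hD, hweight⟩ := hD₀.wordPreimage hδ hw v
  have hqD : q ∈ wordPreimage δ v D₀ := mem_wordPreimage.mpr (hv ▸ hr)
  rw [← hclq.wordPreimage_eq_filter hD.1 hqD hq]
  obtain ⟨hmax, hweight'⟩ := hD.wordPreimage hδ hw s
  exact ⟨hmax, hweight'.trans (hweight.trans hweight₀)⟩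

/-- If `V·s` is an F-clique, then for every `q ∈ V·s` the preimage
`δ_s⁻¹({q})` is an F-maximal set, i.e. its weight equals `w*`. -/
theorem preimage_of_FClique_is_F_maximal {V : Type} [Fintype V] [DecidableEq V]
    [Nonempty V] (E : V → Multiset V) (k : ℕ) (hAGW : IsAGW E k)
    (δ : Fin k → V → V) (hδ : IsColoring E δ) (w : V → ℕ) (hw : IsWeight E k w)
    (s : List (Fin k)) (hclq : IsFClique δ (Finset.image (wordMap δ s) Finset.univ))
    (q : V) (hq : q ∈ Finset.image (wordMap δ s) Finset.univ) :
    IsFMaximal δ w (Finset.univ.filter (fun p => wordMap δ s p = q)) ∧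
      weight w (Finset.univ.filter (fun p => wordMap δ s p = q)) = wstar δ w :=
  preimage_of_FClique_is_F_maximal_general E k hAGW δ hδ w hw s hclq q hq
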